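/- arXiv:math-ph/0505061 — 7 statements merged into one kernel-verified Lean document; each statement's English description precedes it below -/
import Mathlib

section
/- Let ω be a coherent state on a polarized C*-algebra (A, P̄) and ρ a nonzero positive linear functional on A with ρ ≤ ω. Then (1/ρ(1))ρ agrees with ω on P̄ and (1/ρ(1))ρ is itself a coherent state. -/
set_option linter.unusedSectionVars false

open scoped ComplexOrder InnerProductSpace

variable {A : Type*} [NormedRing A] [StarRing A] [CStarRing A] [NormedAlgebra ℂ A]
  [StarModule ℂ A] [CompleteSpace A]

/-- A state on a unital C*-algebra: a positive linear functional of norm one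
(equivalently, taking the value 1 at the unit). -/
def IsState (ω : A →ₗ[ℂ] ℂ) : Prop :=
  ω 1 = 1 ∧ ∀ x : A, 0 ≤ ω (star x * x)

/-- A polarization of a unital C*-algebra `A`: a closed commutative unital Banach
subalgebra `P` generating `A` (as a C*-algebra) with `P ∩ P* = ℂ·1`. -/
def IsPolarization (P : Subalgebra ℂ A) : Prop :=
  IsClosed (P : Set A) ∧
  (∀ a ∈ P, ∀ b ∈ P, a * b = b * a) ∧
  (Algebra.adjoin ℂ ((P : Set A) ∪ star (P : Set A))).topologicalClosure = ⊤ ∧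
  (∀ x ∈ P, star x ∈ P → ∃ c : ℂ, x = algebraMap ℂ A c)

/-- A coherent state on the polarized C*-algebra `(A, P)`. -/
def IsCoherentState (P : Subalgebra ℂ A) (ω : A →ₗ[ℂ] ℂ) : Prop :=
  IsState ω ∧ ∀ x : A, ∀ a ∈ P, ω (x * a) = ω x * ω a

/-- The polarized C*-algebra `(A, P)` admits norm normal ordering: finite sums
`∑ bₖ* aₖ` with `aₖ, bₖ ∈ P` are norm-dense in `A`. -/
def AdmitsNormalOrdering (P : Subalgebra ℂ A) : Prop :=
  Dense {x : A | ∃ (n : ℕ) (a b : Fin n → A), (∀ i, a i ∈ P ∧ b i ∈ P) ∧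
    x = ∑ i, star (b i) * a i}

/-- `(π, H, v)` is a GNS triple for the state `ω`. -/
def IsGNS {H : Type*} [NormedAddCommGroup H] [InnerProductSpace ℂ H] [CompleteSpace H]
    (ω : A →ₗ[ℂ] ℂ) (π : A →⋆ₐ[ℂ] (H →L[ℂ] H)) (v : H) : Prop :=
  ‖v‖ = 1 ∧ (∀ x : A, ω x = ⟪v, π x v⟫_ℂ) ∧
    Dense (Set.range fun x : A => π x v)

/-!
If `ρ ≤ ω` and `a ∈ P̄`, then `a' := a - ω(a)·1 ∈ P̄` has `ω(a'* a') = ω(a'*) ω(a') = 0`, hence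
`ρ(a'* a') = 0`, and the Cauchy–Schwarz inequality for the positive functional `ρ` gives
`ρ(x a') = 0` for every `x`, i.e. `ρ(x a) = ω(a) ρ(x)`. Normalising `ρ` by `ρ(1) > 0` turns this
into the coherence identity, with `ρ(a)/ρ(1) = ω(a)` as the case `x = 1`.
-/

open ComplexConjugate

theorem Complex.eq_zero_of_forall_nonneg_add_real_mul {K s : ℂ} (h : ∀ t : ℝ, 0 ≤ K + t * s) :
    s = 0 := by
  have hre (t : ℝ) : 0 ≤ K.re + t * s.re := by simpa using (Complex.nonneg_iff.mp (h t)).1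
  have him (t : ℝ) : K.im + t * s.im = 0 := by simpa using (Complex.nonneg_iff.mp (h t)).2.symm
  refine Complex.ext ?_ ?_
  · by_contra hs
    have := hre (-(K.re + 1) / s.re)
    rw [div_mul_cancel₀ _ hs] at this
    linarith
  · simpa using (him 1).trans (him 0).symm

namespace LinearMap

variable {R : Type*} [Ring R] [StarRing R] [Algebra ℂ R] [StarModule ℂ R]

theorem apply_star_add_smul_mul_add_smul (φ : R →ₗ[ℂ] ℂ) {y : R} (hy : φ (star y * y) = 0)
    (x : R) (c : ℂ) :
    φ (star (x + c • y) * (x + c • y)) =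
      φ (star x * x) + c * φ (star x * y) + conj c * φ (star y * x) := by
  have hexpand : star (x + c • y) * (x + c • y) =
      star x * x + c • (star x * y) + conj c • (star y * x) + (conj c * c) • (star y * y) := by
    simp only [star_add, star_smul, add_mul, mul_add, smul_mul_assoc, mul_smul_comm,
      Complex.star_def]
    module
  rw [hexpand]
  simp [hy]

/-- The degenerate case of Cauchy–Schwarz: positivity along the real lines `x + t y` and
`x + t i y` forces `φ(x* y) + φ(y* x) = 0` and `φ(x* y) - φ(y* x) = 0`. -/
theorem apply_star_mul_eq_zero_of_apply_star_mul_self_eq_zero (φ : R →ₗ[ℂ] ℂ)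
    (hφ : ∀ x : R, 0 ≤ φ (star x * x)) {y : R} (hy : φ (star y * y) = 0) (x : R) :
    φ (star x * y) = 0 := by
  have hsum : φ (star x * y) + φ (star y * x) = 0 :=
    Complex.eq_zero_of_forall_nonneg_add_real_mul (K := φ (star x * x)) fun t => by
      have := hφ (x + (t : ℂ) • y)
      rw [φ.apply_star_add_smul_mul_add_smul hy, Complex.conj_ofReal] at this
      convert this using 1
      ring
  have hdiff : Complex.I * (φ (star x * y) - φ (star y * x)) = 0 :=
    Complex.eq_zero_of_forall_nonneg_add_real_mul (K := φ (star x * x)) fun t => by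
      have := hφ (x + ((t : ℂ) * Complex.I) • y)
      rw [φ.apply_star_add_smul_mul_add_smul hy] at this
      convert this using 1
      simp only [map_mul, Complex.conj_ofReal, Complex.conj_I]
      ring
  have hdiff' : φ (star x * y) - φ (star y * x) = 0 :=
    (mul_eq_zero.mp hdiff).resolve_left Complex.I_ne_zero
  linear_combination (hsum + hdiff') / 2

theorem eq_zero_of_apply_one_eq_zero (φ : R →ₗ[ℂ] ℂ) (hφ : ∀ x : R, 0 ≤ φ (star x * x))
    (h1 : φ 1 = 0) : φ = 0 := by
  ext x
  simpa using φ.apply_star_mul_eq_zero_of_apply_star_mul_self_eq_zero hφ (y := 1)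
    (by simpa using h1) (star x)

theorem apply_one_pos (φ : R →ₗ[ℂ] ℂ) (hφ : ∀ x : R, 0 ≤ φ (star x * x)) (hne : φ ≠ 0) :
    0 < φ 1 :=
  lt_of_le_of_ne (by simpa using hφ 1) fun h => hne (φ.eq_zero_of_apply_one_eq_zero hφ h.symm)

end LinearMap

theorem isState_inv_apply_one_smul (ρ : A →ₗ[ℂ] ℂ) (hρpos : ∀ x : A, 0 ≤ ρ (star x * x))
    (hρne : ρ ≠ 0) : IsState ((ρ 1)⁻¹ • ρ) := by
  have hρ1 := ρ.apply_one_pos hρpos hρne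
  exact ⟨inv_mul_cancel₀ hρ1.ne', fun x => mul_nonneg (RCLike.inv_pos_of_pos hρ1).le (hρpos x)⟩

theorem IsCoherentState.apply_mul_of_le {P : Subalgebra ℂ A} {ω : A →ₗ[ℂ] ℂ}
    (hω : IsCoherentState P ω) {ρ : A →ₗ[ℂ] ℂ} (hρpos : ∀ x : A, 0 ≤ ρ (star x * x))
    (hle : ∀ x : A, ρ (star x * x) ≤ ω (star x * x)) (x : A) {a : A} (ha : a ∈ P) :
    ρ (x * a) = ω a * ρ x := by
  set a' := a - ω a • 1
  have ha' : a' ∈ P := sub_mem ha (P.smul_mem (one_mem P) _)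
  have hωa' : ω a' = 0 := by simp [a', hω.1.1]
  have hρa' : ρ (star a' * a') = 0 :=
    le_antisymm (by simpa [hω.2 _ _ ha', hωa'] using hle a') (hρpos a')
  have hxa' : ρ (x * a') = 0 := by
    simpa using ρ.apply_star_mul_eq_zero_of_apply_star_mul_self_eq_zero hρpos hρa' (star x)
  simpa [a', mul_sub, sub_eq_zero, mul_comm] using hxa'

theorem stmt_5_general (P : Subalgebra ℂ A)
    (ω : A →ₗ[ℂ] ℂ) (hω : IsCoherentState P ω)
    (ρ : A →ₗ[ℂ] ℂ) (hρpos : ∀ x : A, 0 ≤ ρ (star x * x)) (hρne : ρ ≠ 0)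
    (hle : ∀ x : A, ρ (star x * x) ≤ ω (star x * x)) :
    (∀ a ∈ P, (ρ 1)⁻¹ * ρ a = ω a) ∧ IsCoherentState P ((ρ 1)⁻¹ • ρ) := by
  set σ := (ρ 1)⁻¹ • ρ
  have hσ : IsState σ := isState_inv_apply_one_smul ρ hρpos hρne
  have hσmul : ∀ x : A, ∀ a ∈ P, σ (x * a) = ω a * σ x := fun x a ha => by
    simp only [σ, LinearMap.smul_apply, smul_eq_mul, hω.apply_mul_of_le hρpos hle x ha]
    ring
  have hagree : ∀ a ∈ P, σ a = ω a := fun a ha => by simpa [hσ.1] using hσmul 1 a ha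
  exact ⟨hagree, hσ, fun x a ha => by rw [hσmul x a ha, hagree a ha, mul_comm]⟩

/-- If `ρ` is a nonzero positive functional dominated by a coherent state
`ω` on the polarized C*-algebra `(A, P̄)`, then `ρ/ρ(1)` agrees with `ω` on `P̄` and is
itself a coherent state. -/
theorem stmt_5 (P : Subalgebra ℂ A) (hP : IsPolarization P)
    (ω : A →ₗ[ℂ] ℂ) (hω : IsCoherentState P ω)
    (ρ : A →ₗ[ℂ] ℂ) (hρpos : ∀ x : A, 0 ≤ ρ (star x * x)) (hρne : ρ ≠ 0)
    (hle : ∀ x : A, ρ (star x * x) ≤ ω (star x * x)) :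
    (∀ a ∈ P, (ρ 1)⁻¹ * ρ a = ω a) ∧ IsCoherentState P ((ρ 1)⁻¹ • ρ) :=
  stmt_5_general P ω hω ρ hρpos hρne hle
end

section
/- Let (A, P̄) be a polarized C*-algebra admitting norm normal ordering (the set of finite sums Σ b_k* a_k with a_k, b_k ∈ P̄ is norm-dense in A). If ω is a coherent state and ρ is a nonzero positive functional with ρ ≤ ω, then ρ = ρ(1)·ω; in particular every coherent state on such an algebra is a pure state. -/
/-!
For `a ∈ P`, coherence gives `ω (x * (a - ω a • 1)) = 0` for every `x`, so `ω`, and with it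
`ρ ≤ ω`, vanishes on `star c * c` for `c = a - ω a • 1`. The Cauchy–Schwarz inequality for `ρ`
then kills `ρ (x * c)`, i.e. `ρ (x * a) = ω a * ρ x`. Together with `ρ (star b) = star (ρ b)` this
yields `ρ (star b * a) = ρ 1 * ω (star b * a)` for `a, b ∈ P`; normal ordering makes these
elements dense, and positive functionals on a C*-algebra are continuous.
-/

set_option linter.unusedSectionVars false

open scoped ComplexOrder InnerProductSpace

variable {A : Type*} [NormedRing A] [StarRing A] [CStarRing A] [NormedAlgebra ℂ A]
  [StarModule ℂ A] [CompleteSpace A]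

namespace PositiveLinearMap

variable {B : Type*}

section Construction

variable [CStarAlgebra B] [PartialOrder B] [StarOrderedRing B]
  {E : Type*} [AddCommGroup E] [PartialOrder E] [IsOrderedAddMonoid E] [Module ℂ E]

noncomputable def ofMapStarMulSelfNonneg (f : B →ₗ[ℂ] E) (hf : ∀ x, 0 ≤ f (star x * x)) :
    B →ₚ[ℂ] E :=
  .mk₀ f fun _ ha => by
    obtain ⟨x, rfl⟩ := CStarAlgebra.nonneg_iff_eq_star_mul_self.mp ha
    exact hf x

end Construction

section NonUnital

variable [NonUnitalCStarAlgebra B] [PartialOrder B] [StarOrderedRing B]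

lemma apply_mul_eq_zero_of_apply_star_mul_self_eq_zero (f : B →ₚ[ℂ] ℂ) {c : B}
    (hc : f (star c * c) = 0) (x : B) : f (x * c) = 0 := by
  have h := norm_inner_le_norm (𝕜 := ℂ) (f.toPreGNS (star x)) (f.toPreGNS c)
  have : ‖f.toPreGNS c‖ = 0 := by simp [preGNS_norm_def, hc]
  rw [this, mul_zero, preGNS_inner_def] at h
  simpa using h

lemma apply_mul_eq_zero_of_le_of_forall_apply_mul_eq_zero {ρ ω : B →ₚ[ℂ] ℂ}
    (hle : ∀ x, ρ (star x * x) ≤ ω (star x * x)) {c : B} (hc : ∀ y, ω (y * c) = 0) (x : B) :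
    ρ (x * c) = 0 :=
  ρ.apply_mul_eq_zero_of_apply_star_mul_self_eq_zero
    (le_antisymm (hc (star c) ▸ hle c) (ρ.map_nonneg (star_mul_self_nonneg c))) x

end NonUnital

section Unital

variable [CStarAlgebra B] [PartialOrder B] [StarOrderedRing B] {ρ ω : B →ₚ[ℂ] ℂ}

lemma apply_mul_eq_of_le {a : B} (hle : ∀ x, ρ (star x * x) ≤ ω (star x * x))
    (ha : ∀ y, ω (y * a) = ω y * ω a) (x : B) : ρ (x * a) = ω a * ρ x := by
  have hc : ∀ y, ω (y * (a - ω a • 1)) = 0 := fun y => by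
    simp [mul_sub, ha, mul_comm]
  have := apply_mul_eq_zero_of_le_of_forall_apply_mul_eq_zero hle hc x
  simpa [mul_sub, sub_eq_zero] using this

lemma apply_star_mul_eq_of_le {a b : B} (hle : ∀ x, ρ (star x * x) ≤ ω (star x * x))
    (ha : ∀ y, ω (y * a) = ω y * ω a) (hb : ∀ y, ω (y * b) = ω y * ω b) :
    ρ (star b * a) = ρ 1 * ω (star b * a) := by
  have hρb : ρ b = ω b * ρ 1 := by simpa using apply_mul_eq_of_le hle hb 1
  rw [apply_mul_eq_of_le hle ha, ha, map_star ρ, map_star ω, hρb, star_mul, ← map_star ρ,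
    star_one]
  ring

end Unital

end PositiveLinearMap

theorem stmt_6_general (P : Subalgebra ℂ A)
    (hno : AdmitsNormalOrdering P)
    (ω : A →ₗ[ℂ] ℂ) (hω : IsCoherentState P ω)
    (ρ : A →ₗ[ℂ] ℂ) (hρpos : ∀ x : A, 0 ≤ ρ (star x * x))
    (hle : ∀ x : A, ρ (star x * x) ≤ ω (star x * x)) :
    ρ = ρ 1 • ω := by
  -- Positivity on all `star x * x` is positivity for the spectral order of the C*-algebra `A`.
  let _ : CStarAlgebra A := {}
  let _ := CStarAlgebra.spectralOrder A
  have _ := CStarAlgebra.spectralOrderedRing A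
  obtain ⟨⟨-, hωpos⟩, hcoh⟩ := hω
  let ρ' := PositiveLinearMap.ofMapStarMulSelfNonneg ρ hρpos
  let ω' := PositiveLinearMap.ofMapStarMulSelfNonneg ω hωpos
  have hsum : Set.EqOn ρ (ρ 1 • ω) {x : A | ∃ (n : ℕ) (a b : Fin n → A),
      (∀ i, a i ∈ P ∧ b i ∈ P) ∧ x = ∑ i, star (b i) * a i} := by
    rintro _ ⟨n, a, b, hab, rfl⟩
    simp only [Pi.smul_apply, map_sum, smul_eq_mul, Finset.mul_sum]
    exact Finset.sum_congr rfl fun i _ => PositiveLinearMap.apply_star_mul_eq_of_le (ρ := ρ')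
      (ω := ω') hle (fun y => hcoh y _ (hab i).1) (fun y => hcoh y _ (hab i).2)
  exact LinearMap.coe_injective <| Continuous.ext_on hno (map_continuous ρ')
    ((map_continuous ω').const_smul (ρ 1)) hsum

/-- On a polarized C*-algebra admitting norm normal ordering, any nonzero
positive functional dominated by a coherent state `ω` is a multiple of it:
`ρ = ρ(1)·ω`; in particular every coherent state is pure. -/
theorem stmt_6 (P : Subalgebra ℂ A) (hP : IsPolarization P)
    (hno : AdmitsNormalOrdering P)
    (ω : A →ₗ[ℂ] ℂ) (hω : IsCoherentState P ω)
    (ρ : A →ₗ[ℂ] ℂ) (hρpos : ∀ x : A, 0 ≤ ρ (star x * x)) (hρne : ρ ≠ 0)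
    (hle : ∀ x : A, ρ (star x * x) ≤ ω (star x * x)) :
    ρ = ρ 1 • ω :=
  stmt_6_general P hno ω hω ρ hρpos hle
end

section
/- For a coherent state ω on a polarized C*-algebra (A, P̄), the subspace π_ω(P)v_ω = {π_ω(a*)v_ω : a ∈ P̄} is dense in the GNS Hilbert space H_ω, provided (A, P̄) admits norm normal ordering. -/
/-! Coherence makes `v` a joint eigenvector of `π(P)`: for `a ∈ P`, `‖π(a)v‖² = ω(a*a) = |ω(a)|²`,
the equality case of Cauchy–Schwarz against the unit vector `v`, so `π(a)v = ω(a)v`. Hence a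
normally ordered sum `∑ bₖ* aₖ` sends `v` to `π((∑ conj(ω aₖ) bₖ)*)v`. These sums are dense in
`A` and `x ↦ π(x)v` is continuous with dense range, so their images are dense in `H`. -/

set_option linter.unusedSectionVars false

open scoped ComplexOrder InnerProductSpace

variable {A : Type*} [NormedRing A] [StarRing A] [CStarRing A] [NormedAlgebra ℂ A]
  [StarModule ℂ A] [CompleteSpace A]

theorem eq_inner_smul_of_inner_self_eq {𝕜 E : Type*} [RCLike 𝕜] [NormedAddCommGroup E]
    [InnerProductSpace 𝕜 E] {u v : E} (hv : ‖v‖ = 1)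
    (h : ⟪u, u⟫_𝕜 = ⟪u, v⟫_𝕜 * ⟪v, u⟫_𝕜) : u = ⟪v, u⟫_𝕜 • v := by
  have hvv : ⟪v, v⟫_𝕜 = 1 := by simp [inner_self_eq_norm_sq_to_K, hv]
  have hdefect : ⟪u - ⟪v, u⟫_𝕜 • v, u - ⟪v, u⟫_𝕜 • v⟫_𝕜 = 0 := by
    simp only [inner_sub_left, inner_sub_right, inner_smul_left, inner_smul_right, h, hvv,
      ← inner_conj_symm v u]
    ring
  exact sub_eq_zero.mp (inner_self_eq_zero.mp hdefect)

section GNS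

variable {B : Type*} [NormedRing B] [StarRing B] [NormedAlgebra ℂ B]
  {H : Type*} [NormedAddCommGroup H] [InnerProductSpace ℂ H] [CompleteSpace H]
  {ω : B →ₗ[ℂ] ℂ} {π : B →⋆ₐ[ℂ] (H →L[ℂ] H)} {v : H}

theorem inner_starAlgHom_apply_left (x : B) (u w : H) :
    ⟪π x u, w⟫_ℂ = ⟪u, π (star x) w⟫_ℂ := by
  rw [map_star, ContinuousLinearMap.star_eq_adjoint, ContinuousLinearMap.adjoint_inner_right]

theorem IsGNS.map_star (hGNS : IsGNS ω π v) (x : B) : ω (star x) = starRingEnd ℂ (ω x) := by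
  rw [hGNS.2.1, hGNS.2.1, ← inner_starAlgHom_apply_left, inner_conj_symm]

theorem IsGNS.apply_eq_smul_of_mem {P : Subalgebra ℂ B} (hGNS : IsGNS ω π v)
    (hω : IsCoherentState P ω) {a : B} (ha : a ∈ P) : π a v = ω a • v := by
  have hω_apply : ω a = ⟪v, π a v⟫_ℂ := hGNS.2.1 a
  rw [hω_apply]
  refine eq_inner_smul_of_inner_self_eq hGNS.1 ?_
  rw [inner_starAlgHom_apply_left, ← mul_apply_eq_comp, ← map_mul, ← hGNS.2.1, hω.2 _ _ ha,
    hGNS.map_star, ← inner_conj_symm, hω_apply]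

theorem IsGNS.exists_apply_star_of_normalOrdered [StarModule ℂ B] {P : Subalgebra ℂ B}
    (hGNS : IsGNS ω π v) (hω : IsCoherentState P ω) {n : ℕ} {a b : Fin n → B} (hab : ∀ i, a i ∈ P ∧ b i ∈ P) :
    ∃ c ∈ P, π (∑ i, star (b i) * a i) v = π (star c) v := by
  refine ⟨∑ i, starRingEnd ℂ (ω (a i)) • b i,
    Subalgebra.sum_mem P fun i _ => Subalgebra.smul_mem P (hab i).2 _, ?_⟩
  simp [map_mul, mul_apply_eq_comp, hGNS.apply_eq_smul_of_mem hω (hab _).1]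

end GNS

theorem continuous_starAlgHom_apply {H : Type*} [NormedAddCommGroup H] [InnerProductSpace ℂ H]
    [CompleteSpace H] (π : A →⋆ₐ[ℂ] (H →L[ℂ] H)) (v : H) : Continuous fun x => π x v := by
  let : CStarAlgebra A :=
    { ‹NormedRing A›, ‹StarRing A›, ‹CompleteSpace A›, ‹CStarRing A›,
      ‹NormedAlgebra ℂ A›, ‹StarModule ℂ A› with }
  open scoped CStarAlgebra in
  exact (ContinuousLinearMap.apply ℂ H v).continuous.comp (map_continuous π)

theorem stmt_10_general {H : Type*} [NormedAddCommGroup H] [InnerProductSpace ℂ H] [CompleteSpace H]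
    (P : Subalgebra ℂ A) (hno : AdmitsNormalOrdering P)
    (ω : A →ₗ[ℂ] ℂ) (hω : IsCoherentState P ω)
    (π : A →⋆ₐ[ℂ] (H →L[ℂ] H)) (v : H) (hGNS : IsGNS ω π v) :
    Dense {w : H | ∃ a ∈ P, w = π (star a) v} := by
  refine (DenseRange.dense_image hGNS.2.2 (continuous_starAlgHom_apply π v) hno).mono ?_
  rintro _ ⟨_, ⟨n, a, b, hab, rfl⟩, rfl⟩
  obtain ⟨c, hc, hπc⟩ := hGNS.exists_apply_star_of_normalOrdered hω hab
  exact ⟨c, hc, hπc⟩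

/-- For a coherent state `ω` on a polarized C*-algebra with norm normal
ordering, the subspace `π_ω(P) v_ω = {π_ω(a*) v_ω : a ∈ P̄}` is dense in the GNS
Hilbert space. -/
theorem stmt_10 {H : Type*} [NormedAddCommGroup H] [InnerProductSpace ℂ H] [CompleteSpace H]
    (P : Subalgebra ℂ A) (hP : IsPolarization P) (hno : AdmitsNormalOrdering P)
    (ω : A →ₗ[ℂ] ℂ) (hω : IsCoherentState P ω)
    (π : A →⋆ₐ[ℂ] (H →L[ℂ] H)) (v : H) (hGNS : IsGNS ω π v) :
    Dense {w : H | ∃ a ∈ P, w = π (star a) v} :=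
  stmt_10_general P hno ω hω π v hGNS
end

section
/- Let ω be a coherent state on a polarized C*-algebra (A, P̄) with norm normal ordering and π_ω its (irreducible) GNS representation. A unit vector v ∈ H_ω defines a coherent state ν(x) = ⟨v, π_ω(x)v⟩ if and only if π_ω(a)v = ν(a)v for all a ∈ P̄. -/
/-!
Write `c = ⟪w, π a w⟫`. If `ν` is multiplicative on `P`, then
`‖π a w‖² = ν(a* a) = ν(a*) ν(a) = |c|²`, so `‖π a w - c w‖² = ‖π a w‖² - |c|² = 0`:
equality in Cauchy–Schwarz forces `w` to be an eigenvector. Conversely, if `π a w = c w` then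
`ν(x a) = ⟪w, π x (c w)⟫ = ν(x) c`.
-/

set_option linter.unusedSectionVars false

open scoped ComplexOrder InnerProductSpace

variable {A : Type*} [NormedRing A] [StarRing A] [CStarRing A] [NormedAlgebra ℂ A]
  [StarModule ℂ A] [CompleteSpace A]

open ComplexConjugate

section UnitVector

variable {𝕜 E : Type*} [RCLike 𝕜] [NormedAddCommGroup E] [InnerProductSpace 𝕜 E]

theorem eq_inner_smul_of_inner_self_eq_s11 {w u : E} (hw : ‖w‖ = 1)
    (h : ⟪u, u⟫_𝕜 = conj ⟪w, u⟫_𝕜 * ⟪w, u⟫_𝕜) : u = ⟪w, u⟫_𝕜 • w := by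
  have hww : ⟪w, w⟫_𝕜 = 1 := by simp [inner_self_eq_norm_sq_to_K, hw]
  have huw : ⟪u, w⟫_𝕜 = conj ⟪w, u⟫_𝕜 := (inner_conj_symm u w).symm
  rw [← sub_eq_zero, ← inner_self_eq_zero (𝕜 := 𝕜), inner_sub_sub_self, inner_smul_left,
    inner_smul_right, inner_smul_left, inner_smul_right, hww, h, huw]
  ring

end UnitVector

namespace ContinuousLinearMap

variable {𝕜 H : Type*} [RCLike 𝕜] [NormedAddCommGroup H] [InnerProductSpace 𝕜 H]
  [CompleteSpace H]

theorem inner_star_apply_self (T : H →L[𝕜] H) (w : H) :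
    ⟪w, star T w⟫_𝕜 = conj ⟪w, T w⟫_𝕜 := by
  rw [star_eq_adjoint, adjoint_inner_right, inner_conj_symm]

theorem inner_star_mul_apply_self (T : H →L[𝕜] H) (w : H) :
    ⟪w, (star T * T) w⟫_𝕜 = ⟪T w, T w⟫_𝕜 := by
  rw [mul_apply_eq_comp, star_eq_adjoint, adjoint_inner_right]

theorem inner_mul_apply_of_apply_eq_smul {S T : H →L[𝕜] H} {w : H} {c : 𝕜}
    (hT : T w = c • w) : ⟪w, (S * T) w⟫_𝕜 = ⟪w, S w⟫_𝕜 * c := by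
  rw [mul_apply_eq_comp, hT, map_smul, inner_smul_right, mul_comm]

end ContinuousLinearMap

theorem stmt_11_general {H : Type*} [NormedAddCommGroup H] [InnerProductSpace ℂ H] [CompleteSpace H]
    (P : Subalgebra ℂ A)
    (π : A →⋆ₐ[ℂ] (H →L[ℂ] H))
    (w : H) (hw : ‖w‖ = 1) :
    (∀ x : A, ∀ a ∈ P, ⟪w, π (x * a) w⟫_ℂ = ⟪w, π x w⟫_ℂ * ⟪w, π a w⟫_ℂ) ↔
      ∀ a ∈ P, π a w = ⟪w, π a w⟫_ℂ • w := by
  constructor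
  · intro hmul a ha
    apply eq_inner_smul_of_inner_self_eq_s11 hw
    have hstar := hmul (star a) a ha
    rwa [map_mul, map_star, ContinuousLinearMap.inner_star_mul_apply_self,
      ContinuousLinearMap.inner_star_apply_self] at hstar
  · intro heig x a ha
    rw [map_mul]
    exact ContinuousLinearMap.inner_mul_apply_of_apply_eq_smul (heig a ha)

/-- In the (irreducible) GNS representation of a coherent state `ω` on a
polarized C*-algebra with norm normal ordering, a unit vector `w` defines a coherent
state `ν(x) = ⟪w, π_ω(x) w⟫` if and only if `w` is a simultaneous eigenvector:
`π_ω(a) w = ν(a) w` for all `a ∈ P̄`. -/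
theorem stmt_11 {H : Type*} [NormedAddCommGroup H] [InnerProductSpace ℂ H] [CompleteSpace H]
    (P : Subalgebra ℂ A) (hP : IsPolarization P) (hno : AdmitsNormalOrdering P)
    (ω : A →ₗ[ℂ] ℂ) (hω : IsCoherentState P ω)
    (π : A →⋆ₐ[ℂ] (H →L[ℂ] H)) (v : H) (hGNS : IsGNS ω π v)
    (hirr : ∀ w : H, w ≠ 0 → Dense (Set.range fun x : A => π x w))
    (w : H) (hw : ‖w‖ = 1) :
    (∀ x : A, ∀ a ∈ P, ⟪w, π (x * a) w⟫_ℂ = ⟪w, π x w⟫_ℂ * ⟪w, π a w⟫_ℂ) ↔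
      ∀ a ∈ P, π a w = ⟪w, π a w⟫_ℂ • w :=
  stmt_11_general P π w hw
end

section
/- A multiplicative linear functional μ on the commutative Banach algebra P̄ extends to a coherent state on the polarized C*-algebra (A, P̄) if and only if for all a₁,…,a_J, b₁,…,b_S ∈ P̄: Σ a_j*a_j ≤ Σ b_s*b_s (in the order of A) implies Σ|μ(a_j)|² ≤ Σ|μ(b_s)|². -/
set_option linter.unusedSectionVars false

open scoped ComplexOrder InnerProductSpace

variable {A : Type*} [NormedRing A] [StarRing A] [CStarRing A] [NormedAlgebra ℂ A]
  [StarModule ℂ A] [CompleteSpace A]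

set_option maxHeartbeats 1000000

section polar
variable {B : Type*} [Ring B] [Algebra ℂ B] [StarRing B] [StarModule ℂ B]

lemma expand4 (w : ℂ) (x y : B) :
    star (x + w • y) * (x + w • y) =
      star x * x + w • (star x * y) + (starRingEnd ℂ w) • (star y * x)
        + ((starRingEnd ℂ w) * w) • (star y * y) := by
  simp only [star_add, star_smul, add_mul, mul_add, smul_mul_assoc, mul_smul_comm, smul_smul,
    smul_add, starRingEnd_apply]
  module

lemma polar4 (x y : B) :
    ∑ k ∈ Finset.range 4, (Complex.I ^ k) •
        (star (x + Complex.I ^ k • y) * (x + Complex.I ^ k • y)) =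
      (4 : ℂ) • (star y * x) := by
  simp only [expand4, Finset.sum_range_succ, Finset.range_zero, Finset.sum_empty]
  norm_num [map_pow, Complex.conj_I, pow_succ]
  match_scalars <;> (simp [Complex.ext_iff]; try ring)
end polar

lemma conj_mul_self_eq (w : ℂ) : (starRingEnd ℂ w) * w = ((‖w‖ ^ 2 : ℝ) : ℂ) := by
  rw [mul_comm, Complex.mul_conj, Complex.normSq_eq_norm_sq]

section Aux
variable {A : Type*} [NormedRing A] [StarRing A] [CStarRing A] [NormedAlgebra ℂ A]
  [StarModule ℂ A] [CompleteSpace A] [PartialOrder A] [StarOrderedRing A]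
  {P : Subalgebra ℂ A} {μ : P →ₗ[ℂ] ℂ}

lemma star_smul_mul (z : ℂ) (x : A) :
    star (z • x) * (z • x) = (starRingEnd ℂ z * z) • (star x * x) := by
  rw [star_smul, smul_mul_assoc, mul_smul_comm, smul_smul, starRingEnd_apply]

lemma keyR (hyp : ∀ (J S : ℕ) (a : Fin J → P) (b : Fin S → P),
      (∑ j, star ((a j : A)) * (a j : A)) ≤ (∑ s, star ((b s : A)) * (b s : A)) →
      (∑ j, ‖μ (a j)‖ ^ 2) ≤ ∑ s, ‖μ (b s)‖ ^ 2)
    {ι : Type*} (t : Finset ι) (f : ι → ℝ) (c : ι → P)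
    (h : (0:A) ≤ ∑ m ∈ t, ((f m : ℂ)) • (star (c m : A) * (c m : A))) :
    (0:ℝ) ≤ ∑ m ∈ t, f m * ‖μ (c m)‖ ^ 2 := by
  classical
  set n := t.card with hn
  let e : t ≃ Fin n := t.equivFin
  have hconv : ∀ g : ι → ℝ, ∑ m ∈ t, g m = ∑ j : Fin n, g (e.symm j) := by
    intro g
    rw [← Finset.sum_coe_sort t g, ← Equiv.sum_comp e.symm (fun x : t => g ↑x)]
  have hconvA : ∀ g : ι → A, ∑ m ∈ t, g m = ∑ j : Fin n, g (e.symm j) := by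
    intro g
    rw [← Finset.sum_coe_sort t g, ← Equiv.sum_comp e.symm (fun x : t => g ↑x)]
  let a : Fin n → P := fun j =>
    if 0 ≤ f (e.symm j) then ((Real.sqrt (f (e.symm j)) : ℂ)) • c (e.symm j) else 0
  let b : Fin n → P := fun j =>
    if 0 ≤ f (e.symm j) then 0 else ((Real.sqrt (-(f (e.symm j))) : ℂ)) • c (e.symm j)
  have hA : ∀ j, star ((a j : A)) * (a j : A) - star ((b j : A)) * (b j : A)
      = ((f (e.symm j) : ℂ)) • (star ((c (e.symm j)) : A) * ((c (e.symm j)) : A)) := by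
    intro j
    by_cases h0 : 0 ≤ f (e.symm j)
    · simp only [a, b, if_pos h0, ZeroMemClass.coe_zero, star_zero, zero_mul, sub_zero,
        SetLike.val_smul, star_smul_mul, Complex.conj_ofReal, ← Complex.ofReal_mul,
        Real.mul_self_sqrt h0]
    · simp only [a, b, if_neg h0, ZeroMemClass.coe_zero, star_zero, zero_mul, zero_sub,
        SetLike.val_smul, star_smul_mul, Complex.conj_ofReal, ← Complex.ofReal_mul,
        Real.mul_self_sqrt (show (0:ℝ) ≤ -f (e.symm j) by linarith [not_le.mp h0]),
        ← neg_smul, ← Complex.ofReal_neg, neg_neg]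
  have hM : ∀ j, ‖μ (a j)‖ ^ 2 - ‖μ (b j)‖ ^ 2
      = f (e.symm j) * ‖μ (c (e.symm j))‖ ^ 2 := by
    intro j
    by_cases h0 : 0 ≤ f (e.symm j)
    · simp only [a, b, if_pos h0, map_zero, norm_zero, map_smul, smul_eq_mul, norm_mul,
        Complex.norm_real, Real.norm_eq_abs, mul_pow, sq_abs, Real.sq_sqrt h0]
      ring
    · simp only [a, b, if_neg h0, map_zero, norm_zero, map_smul, smul_eq_mul, norm_mul,
        Complex.norm_real, Real.norm_eq_abs, mul_pow, sq_abs,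
        Real.sq_sqrt (show (0:ℝ) ≤ -(f (e.symm j)) by linarith [not_le.mp h0])]
      ring
  have hle : (∑ j, star ((b j : A)) * (b j : A)) ≤ ∑ j, star ((a j : A)) * (a j : A) := by
    rw [← sub_nonneg, ← Finset.sum_sub_distrib]
    simpa only [hA, ← hconvA fun m => ((f m : ℂ)) • (star ((c m) : A) * ((c m) : A))] using h
  have hres := hyp n n b a hle
  have hgoal : ∑ m ∈ t, f m * ‖μ (c m)‖ ^ 2
      = (∑ j, ‖μ (a j)‖ ^ 2) - ∑ j, ‖μ (b j)‖ ^ 2 := by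
    rw [← Finset.sum_sub_distrib]
    simp only [hM]
    exact hconv _
  rw [hgoal]
  linarith

lemma sre (w : ℂ) : ((w.re : ℝ) : ℂ) = (2⁻¹ : ℂ) * (w + starRingEnd ℂ w) := by
  rw [Complex.add_conj]
  push_cast
  ring

lemma sim (w : ℂ) : ((w.im : ℝ) : ℂ) = (-Complex.I * 2⁻¹) * (w - starRingEnd ℂ w) := by
  rw [Complex.sub_conj]
  push_cast
  linear_combination (w.im : ℂ) * Complex.I_sq

lemma keyC (hyp : ∀ (J S : ℕ) (a : Fin J → P) (b : Fin S → P),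
      (∑ j, star ((a j : A)) * (a j : A)) ≤ (∑ s, star ((b s : A)) * (b s : A)) →
      (∑ j, ‖μ (a j)‖ ^ 2) ≤ ∑ s, ‖μ (b s)‖ ^ 2)
    {ι : Type*} (t : Finset ι) (lam : ι → ℂ) (c : ι → P)
    (h : (0:A) ≤ ∑ q ∈ t, lam q • (star (c q : A) * (c q : A))) :
    (0:ℂ) ≤ ∑ q ∈ t, lam q * ((‖μ (c q)‖ ^ 2 : ℝ) : ℂ) := by
  classical
  set x : A := ∑ q ∈ t, lam q • (star (c q : A) * (c q : A)) with hx
  have hsa : IsSelfAdjoint x := IsSelfAdjoint.of_nonneg h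
  have hstar : star x = ∑ q ∈ t, (starRingEnd ℂ (lam q)) • (star (c q : A) * (c q : A)) := by
    rw [hx, star_sum]
    refine Finset.sum_congr rfl fun q _ => ?_
    rw [star_smul, star_mul, star_star, starRingEnd_apply]
  have hre : ∑ q ∈ t, (((lam q).re : ℝ) : ℂ) • (star (c q : A) * (c q : A)) = x := by
    have hterm : ∀ q ∈ t, (((lam q).re : ℝ) : ℂ) • (star (c q : A) * (c q : A))
        = (2⁻¹ : ℂ) • (lam q • (star (c q : A) * (c q : A))
            + (starRingEnd ℂ (lam q)) • (star (c q : A) * (c q : A))) := by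
      intro q _
      rw [← add_smul, smul_smul, ← sre]
    rw [Finset.sum_congr rfl hterm, ← Finset.smul_sum, Finset.sum_add_distrib, ← hx, ← hstar,
      hsa.star_eq]
    module
  have him : ∑ q ∈ t, (((lam q).im : ℝ) : ℂ) • (star (c q : A) * (c q : A)) = 0 := by
    have hterm : ∀ q ∈ t, (((lam q).im : ℝ) : ℂ) • (star (c q : A) * (c q : A))
        = (-Complex.I * 2⁻¹ : ℂ) • (lam q • (star (c q : A) * (c q : A))
            - (starRingEnd ℂ (lam q)) • (star (c q : A) * (c q : A))) := by
      intro q _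
      rw [← sub_smul, smul_smul, ← sim]
    rw [Finset.sum_congr rfl hterm, ← Finset.smul_sum, Finset.sum_sub_distrib, ← hx, ← hstar,
      hsa.star_eq, sub_self, smul_zero]
  have R1 : (0:ℝ) ≤ ∑ q ∈ t, (lam q).re * ‖μ (c q)‖ ^ 2 := by
    refine keyR hyp t _ c ?_
    rw [hre]; exact h
  have R2a : (0:ℝ) ≤ ∑ q ∈ t, (lam q).im * ‖μ (c q)‖ ^ 2 := by
    refine keyR hyp t _ c ?_
    rw [him]
  have R2b : (0:ℝ) ≤ ∑ q ∈ t, (-(lam q).im) * ‖μ (c q)‖ ^ 2 := by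
    refine keyR hyp t (fun q => -(lam q).im) c ?_
    have : ∑ m ∈ t, ((-(lam m).im : ℝ) : ℂ) • (star (c m : A) * (c m : A))
        = -∑ q ∈ t, (((lam q).im : ℝ) : ℂ) • (star (c q : A) * (c q : A)) := by
      rw [← Finset.sum_neg_distrib]
      refine Finset.sum_congr rfl fun q _ => ?_
      push_cast
      rw [neg_smul]
    rw [this, him, neg_zero]
  have R2 : ∑ q ∈ t, (lam q).im * ‖μ (c q)‖ ^ 2 = 0 := by
    have : ∑ q ∈ t, (-(lam q).im) * ‖μ (c q)‖ ^ 2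
        = -∑ q ∈ t, (lam q).im * ‖μ (c q)‖ ^ 2 := by
      rw [← Finset.sum_neg_distrib]
      exact Finset.sum_congr rfl fun q _ => by ring
    rw [this] at R2b
    linarith
  rw [Complex.nonneg_iff]
  constructor
  · have : (∑ q ∈ t, lam q * ((‖μ (c q)‖ ^ 2 : ℝ) : ℂ)).re
        = ∑ q ∈ t, (lam q).re * ‖μ (c q)‖ ^ 2 := by
      rw [Complex.re_sum]
      exact Finset.sum_congr rfl fun q _ => by simp [Complex.mul_re, ← Complex.ofReal_pow]
    rw [this]
    simpa using R1
  · have : (∑ q ∈ t, lam q * ((‖μ (c q)‖ ^ 2 : ℝ) : ℂ)).im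
        = ∑ q ∈ t, (lam q).im * ‖μ (c q)‖ ^ 2 := by
      rw [Complex.im_sum]
      exact Finset.sum_congr rfl fun q _ => by simp [Complex.mul_im, ← Complex.ofReal_pow]
    rw [this]
    simpa using R2.symm

lemma keyPOS (hyp : ∀ (J S : ℕ) (a : Fin J → P) (b : Fin S → P),
      (∑ j, star ((a j : A)) * (a j : A)) ≤ (∑ s, star ((b s : A)) * (b s : A)) →
      (∑ j, ‖μ (a j)‖ ^ 2) ≤ ∑ s, ‖μ (b s)‖ ^ 2)
    {ι : Type*} (t : Finset ι) (z : ι → ℂ) (b a : ι → P)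
    (h : (0:A) ≤ ∑ p ∈ t, z p • (star (b p : A) * (a p : A))) :
    (0:ℂ) ≤ ∑ p ∈ t, z p * (starRingEnd ℂ (μ (b p)) * μ (a p)) := by
  classical
  set t' : Finset (ι × ℕ) := t ×ˢ Finset.range 4 with ht'
  set lam : ι × ℕ → ℂ := fun q => z q.1 * Complex.I ^ q.2 / 4 with hlam
  set c : ι × ℕ → P := fun q => a q.1 + (Complex.I ^ q.2 : ℂ) • b q.1 with hc
  have hcoe : ∀ q : ι × ℕ, ((c q : A)) = (a q.1 : A) + (Complex.I ^ q.2 : ℂ) • (b q.1 : A) := by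
    intro q; simp [hc]
  have hXA : ∑ q ∈ t', lam q • (star (c q : A) * (c q : A))
      = ∑ p ∈ t, z p • (star (b p : A) * (a p : A)) := by
    rw [ht', Finset.sum_product]
    refine Finset.sum_congr rfl fun p _ => ?_
    have : ∀ k ∈ Finset.range 4, lam (p, k) • (star (c (p, k) : A) * (c (p, k) : A))
        = (z p / 4) • ((Complex.I ^ k) •
            (star ((a p : A) + (Complex.I ^ k : ℂ) • (b p : A))
              * ((a p : A) + (Complex.I ^ k : ℂ) • (b p : A)))) := by
      intro k _
      rw [hcoe, smul_smul, hlam]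
      ring_nf
    rw [Finset.sum_congr rfl this, ← Finset.smul_sum, polar4, smul_smul]
    congr 1
    ring
  have hXC : ∑ q ∈ t', lam q * ((‖μ (c q)‖ ^ 2 : ℝ) : ℂ)
      = ∑ p ∈ t, z p * (starRingEnd ℂ (μ (b p)) * μ (a p)) := by
    rw [ht', Finset.sum_product]
    refine Finset.sum_congr rfl fun p _ => ?_
    have hμc : ∀ k : ℕ, μ (c (p, k)) = μ (a p) + (Complex.I ^ k : ℂ) • μ (b p) := by
      intro k
      simp [hc, map_add, map_smul]
    have hpol := polar4 (B := ℂ) (μ (a p)) (μ (b p))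
    have : ∀ k ∈ Finset.range 4, lam (p, k) * ((‖μ (c (p, k))‖ ^ 2 : ℝ) : ℂ)
        = (z p / 4) * ((Complex.I ^ k) •
            (star (μ (a p) + (Complex.I ^ k : ℂ) • μ (b p))
              * (μ (a p) + (Complex.I ^ k : ℂ) • μ (b p)))) := by
      intro k _
      rw [← conj_mul_self_eq, hμc, hlam]
      simp only [smul_eq_mul, Complex.star_def]
      ring
    rw [Finset.sum_congr rfl this, ← Finset.mul_sum, hpol]
    simp only [smul_eq_mul, Complex.star_def]
    ring
  rw [← hXC]
  exact keyC hyp t' lam c (by rw [hXA]; exact h)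

lemma exists_coherent (P : Subalgebra ℂ A) (hno : AdmitsNormalOrdering P)
    (μ : P →ₗ[ℂ] ℂ)
    (hμmul : ∀ a b : P, μ (a * b) = μ a * μ b) (hμne : μ ≠ 0)
    (hyp : ∀ (J S : ℕ) (a : Fin J → P) (b : Fin S → P),
      (∑ j, star ((a j : A)) * (a j : A)) ≤ (∑ s, star ((b s : A)) * (b s : A)) →
      (∑ j, ‖μ (a j)‖ ^ 2) ≤ ∑ s, ‖μ (b s)‖ ^ 2) :
    ∃ ω : A →ₗ[ℂ] ℂ, (ω 1 = 1 ∧ ∀ x : A, 0 ≤ ω (star x * x)) ∧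
      (∀ x : A, ∀ a ∈ P, ω (x * a) = ω x * ω a) ∧ ∀ a : P, ω (a : A) = μ a := by
  classical
  letI : CStarAlgebra A := {}
  have hno : Dense {x : A | ∃ (n : ℕ) (a b : Fin n → A), (∀ i, a i ∈ P ∧ b i ∈ P) ∧
      x = ∑ i, star (b i) * a i} := hno
  have hμ1 : μ 1 = 1 := by
    have h11 : μ 1 * μ 1 = μ 1 := by
      rw [← hμmul, mul_one]
    have h12 : μ 1 * (μ 1 - 1) = 0 := by ring_nf; linear_combination h11
    rcases mul_eq_zero.mp h12 with h0 | h1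
    · exfalso
      apply hμne
      ext a
      have := hμmul a 1
      rw [mul_one, h0, mul_zero] at this
      simpa using this
    · linear_combination h1
  have halg : ∀ r : ℝ, algebraMap ℝ A r = ((r : ℂ)) • (1:A) := by
    intro r
    rw [IsScalarTower.algebraMap_apply ℝ ℂ A, Complex.coe_algebraMap,
      Algebra.algebraMap_eq_smul_one]
  set v : P × P → A := fun p => star (p.1 : A) * (p.2 : A) with hv
  set pii : ((P × P) →₀ ℂ) →ₗ[ℂ] A := Finsupp.linearCombination ℂ v with hpi
  set phi : ((P × P) →₀ ℂ) →ₗ[ℂ] ℂ :=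
    Finsupp.linearCombination ℂ (fun p : P × P => starRingEnd ℂ (μ p.1) * μ p.2) with hphi
  set D : Submodule ℂ A := LinearMap.range pii with hD
  have hPOSl : ∀ l : (P × P) →₀ ℂ, 0 ≤ pii l → 0 ≤ phi l := by
    intro l hl
    have h1 : pii l = ∑ p ∈ l.support, l p • (star (p.1 : A) * (p.2 : A)) := by
      rw [hpi, Finsupp.linearCombination_apply, Finsupp.sum]
    have h2 : phi l = ∑ p ∈ l.support, l p * (starRingEnd ℂ (μ p.1) * μ p.2) := by
      rw [hphi, Finsupp.linearCombination_apply, Finsupp.sum]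
      exact Finset.sum_congr rfl fun p _ => by rw [smul_eq_mul]
    rw [h2]
    exact keyPOS hyp l.support l (fun p => p.1) (fun p => p.2) (h1 ▸ hl)
  have hker : LinearMap.ker pii ≤ LinearMap.ker phi := by
    intro l hl
    rw [LinearMap.mem_ker] at hl ⊢
    have h1 := hPOSl l (by rw [hl])
    have h2 := hPOSl (-l) (by rw [map_neg, hl, neg_zero])
    rw [map_neg] at h2
    exact le_antisymm (neg_nonneg.mp h2) h1
  set om0 : D →ₗ[ℂ] ℂ :=
    (Submodule.liftQ (LinearMap.ker pii) phi hker).comp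
      (LinearMap.quotKerEquivRange pii).symm.toLinearMap with hom0
  have hom0_apply : ∀ (l : (P × P) →₀ ℂ) (hm : pii l ∈ D), om0 ⟨pii l, hm⟩ = phi l := by
    intro l hm
    have h1 : (LinearMap.quotKerEquivRange pii) (Submodule.Quotient.mk l) = ⟨pii l, hm⟩ := by
      ext
      exact LinearMap.quotKerEquivRange_apply_mk pii l
    rw [hom0, LinearMap.comp_apply, LinearEquiv.coe_toLinearMap, ← h1,
      LinearEquiv.symm_apply_apply, Submodule.liftQ_apply]
  have hgen : ∀ p q : P, star (p : A) * (q : A) ∈ D := by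
    intro p q
    refine ⟨Finsupp.single (p, q) 1, ?_⟩
    rw [hpi, Finsupp.linearCombination_single, one_smul]
  have hom0_gen : ∀ (p q : P) (hm : star (p:A) * (q:A) ∈ D),
      om0 ⟨star (p:A) * (q:A), hm⟩ = starRingEnd ℂ (μ p) * μ q := by
    intro p q hm
    have heq : star (p:A) * (q:A) = pii (Finsupp.single (p,q) 1) := by
      rw [hpi, Finsupp.linearCombination_single, one_smul]
    have h2 : (⟨star (p:A) * (q:A), hm⟩ : D) = ⟨pii (Finsupp.single (p,q) 1), heq ▸ hm⟩ :=
      Subtype.ext heq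
    rw [h2, hom0_apply]
    rw [hphi, Finsupp.linearCombination_single, one_smul]
  have h1D : (1 : A) ∈ D := by
    have := hgen 1 1
    simpa using this
  have hpos0 : ∀ x : D, 0 ≤ (x:A) → 0 ≤ om0 x := by
    rintro ⟨x, hx⟩ hposx
    obtain ⟨l, rfl⟩ := hx
    have h := hPOSl l hposx
    rwa [← hom0_apply l (LinearMap.mem_range_self pii l)] at h
  have hspan : D = Submodule.span ℂ (Set.range v) := by
    rw [hD, hpi, Finsupp.range_linearCombination]
  have hstarD : ∀ x ∈ D, star x ∈ D := by
    intro x hx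
    rw [hspan] at hx ⊢
    induction hx using Submodule.span_induction with
    | mem y hy =>
      obtain ⟨⟨p, q⟩, rfl⟩ := hy
      apply Submodule.subset_span
      refine ⟨(q, p), ?_⟩
      simp only [hv, star_mul, star_star]
    | zero => simpa using Submodule.zero_mem _
    | add y z _ _ ihy ihz =>
      rw [star_add]
      exact Submodule.add_mem _ ihy ihz
    | smul r y _ ihy =>
      rw [star_smul]
      exact Submodule.smul_mem _ _ ihy
  have hsab : ∀ (x : A) (hx : x ∈ D), IsSelfAdjoint x → ‖om0 ⟨x, hx⟩‖ ≤ ‖x‖ := by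
    intro x hx hsa
    have hDm : ((‖x‖ : ℂ)) • (1:A) - x ∈ D :=
      Submodule.sub_mem _ (Submodule.smul_mem _ _ h1D) hx
    have hDp : ((‖x‖ : ℂ)) • (1:A) + x ∈ D :=
      Submodule.add_mem _ (Submodule.smul_mem _ _ h1D) hx
    have hnm : (0:A) ≤ ((‖x‖ : ℂ)) • (1:A) - x := by
      rw [sub_nonneg, ← halg]
      exact hsa.le_algebraMap_norm_self
    have hnp : (0:A) ≤ ((‖x‖ : ℂ)) • (1:A) + x := by
      have h5 := hsa.neg_algebraMap_norm_le_self
      rw [halg] at h5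
      calc (0:A) = -(((‖x‖ : ℂ)) • (1:A)) + ((‖x‖ : ℂ)) • (1:A) := by abel
      _ ≤ x + ((‖x‖ : ℂ)) • (1:A) := add_le_add_left h5 _
      _ = ((‖x‖ : ℂ)) • (1:A) + x := by abel
    have e1 : (⟨((‖x‖ : ℂ)) • (1:A) - x, hDm⟩ : D)
        = ((‖x‖ : ℂ)) • (⟨1, h1D⟩ : D) - ⟨x, hx⟩ := rfl
    have e2 : (⟨((‖x‖ : ℂ)) • (1:A) + x, hDp⟩ : D)
        = ((‖x‖ : ℂ)) • (⟨1, h1D⟩ : D) + ⟨x, hx⟩ := rfl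
    have hone : om0 ⟨1, h1D⟩ = 1 := by
      have h11 : (⟨(1:A), h1D⟩ : D) = ⟨star ((1:P):A) * ((1:P):A), by simpa using hgen 1 1⟩ := by
        apply Subtype.ext
        simp
      rw [h11, hom0_gen, hμ1, map_one, one_mul]
    have hm := hpos0 ⟨_, hDm⟩ hnm
    have hp := hpos0 ⟨_, hDp⟩ hnp
    rw [e1, map_sub, map_smul, hone, smul_eq_mul, mul_one] at hm
    rw [e2, map_add, map_smul, hone, smul_eq_mul, mul_one] at hp
    set w : ℂ := om0 ⟨x, hx⟩ with hw
    rw [Complex.nonneg_iff] at hm hp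
    have him : w.im = 0 := by
      have := hm.2
      simp at this
      linarith [this]
    have hre1 : w.re ≤ ‖x‖ := by
      have := hm.1
      simp at this
      linarith
    have hre2 : -‖x‖ ≤ w.re := by
      have := hp.1
      simp at this
      linarith
    have hwre : w = ((w.re : ℝ) : ℂ) := Complex.ext rfl (by simp [him])
    rw [hwre, Complex.norm_real, Real.norm_eq_abs]
    exact abs_le.mpr ⟨hre2, hre1⟩
  have hbound : ∀ x : D, ‖om0 x‖ ≤ 2 * ‖(x:A)‖ := by
    rintro ⟨x, hx⟩
    set h : A := (2⁻¹:ℂ) • (x + star x) with hh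
    set k : A := ((-Complex.I) * 2⁻¹ : ℂ) • (x - star x) with hk
    have hhD : h ∈ D := Submodule.smul_mem _ _ (Submodule.add_mem _ hx (hstarD x hx))
    have hkD : k ∈ D := Submodule.smul_mem _ _ (Submodule.sub_mem _ hx (hstarD x hx))
    have hhsa : IsSelfAdjoint h := by
      rw [IsSelfAdjoint, hh, star_smul, star_add, star_star]
      have : star ((2:ℂ)⁻¹) = (2:ℂ)⁻¹ := by
        simp [Complex.star_def]
      rw [this, add_comm]
    have hksa : IsSelfAdjoint k := by
      rw [IsSelfAdjoint, hk, star_smul, star_sub, star_star]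
      have : star ((-Complex.I) * 2⁻¹ : ℂ) = Complex.I * 2⁻¹ := by
        simp [Complex.star_def]
      rw [this]
      have hc : (Complex.I * 2⁻¹ : ℂ) = -((-Complex.I) * 2⁻¹ : ℂ) := by ring
      rw [hc, neg_smul, ← smul_neg, neg_sub]
    have hdecomp : x = h + Complex.I • k := by
      rw [hh, hk, smul_smul]
      have : Complex.I * ((-Complex.I) * 2⁻¹) = 2⁻¹ := by
        linear_combination (-(2:ℂ)⁻¹) * Complex.I_sq
      rw [this]
      module
    have hsplit : (⟨x, hx⟩ : D) = ⟨h, hhD⟩ + Complex.I • ⟨k, hkD⟩ := by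
      apply Subtype.ext
      simpa using hdecomp
    have hnh : ‖h‖ ≤ ‖x‖ := by
      rw [hh, norm_smul]
      have h2 : ‖x + star x‖ ≤ 2 * ‖x‖ := by
        calc ‖x + star x‖ ≤ ‖x‖ + ‖star x‖ := norm_add_le _ _
        _ = 2 * ‖x‖ := by rw [norm_star]; ring
      have h3 : ‖(2⁻¹:ℂ)‖ = 2⁻¹ := by norm_num
      rw [h3]
      linarith
    have hnk : ‖k‖ ≤ ‖x‖ := by
      rw [hk, norm_smul]
      have h2 : ‖x - star x‖ ≤ 2 * ‖x‖ := by
        calc ‖x - star x‖ ≤ ‖x‖ + ‖star x‖ := norm_sub_le _ _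
        _ = 2 * ‖x‖ := by rw [norm_star]; ring
      have h3 : ‖((-Complex.I) * 2⁻¹:ℂ)‖ = 2⁻¹ := by
        simp [norm_mul]
      rw [h3]
      linarith
    calc ‖om0 ⟨x, hx⟩‖ = ‖om0 ⟨h, hhD⟩ + Complex.I * om0 ⟨k, hkD⟩‖ := by
          rw [hsplit, map_add, map_smul, smul_eq_mul]
    _ ≤ ‖om0 ⟨h, hhD⟩‖ + ‖Complex.I * om0 ⟨k, hkD⟩‖ := norm_add_le _ _
    _ = ‖om0 ⟨h, hhD⟩‖ + ‖om0 ⟨k, hkD⟩‖ := by rw [norm_mul, Complex.norm_I, one_mul]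
    _ ≤ ‖h‖ + ‖k‖ := add_le_add (hsab h hhD hhsa) (hsab k hkD hksa)
    _ ≤ 2 * ‖x‖ := by linarith
  -- continuous extension
  set g : D →L[ℂ] ℂ := LinearMap.mkContinuous om0 2 hbound with hg
  have hDdense : Dense (D : Set A) := by
    refine hno.mono ?_
    rintro x ⟨n, av, bv, hmem, rfl⟩
    refine Submodule.sum_mem _ fun i _ => ?_
    have := hgen ⟨bv i, (hmem i).2⟩ ⟨av i, (hmem i).1⟩
    simpa using this
  have hdr : DenseRange (D.subtypeL (R := ℂ)) := by
    have hr : Set.range (D.subtypeL (R := ℂ)) = (D : Set A) := Subtype.range_coe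
    rw [DenseRange, hr]
    exact hDdense
  have hui : IsUniformInducing (D.subtypeL (R := ℂ) : D →L[ℂ] A) :=
    isometry_subtype_coe.isUniformInducing
  set om' : A →L[ℂ] ℂ := g.extend D.subtypeL with hom'
  have hval : ∀ x : D, om' (x : A) = om0 x := by
    intro x
    have h1 := ContinuousLinearMap.extend_eq (f := g) (e := D.subtypeL) hdr hui x
    rw [hom']
    exact h1
  have hval_gen : ∀ p q : P, om' (star (p:A) * (q:A)) = starRingEnd ℂ (μ p) * μ q := by
    intro p q
    have h1 := hval ⟨star (p:A) * (q:A), hgen p q⟩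
    rw [h1, hom0_gen]
  have hμext : ∀ a : P, om' ((a:A)) = μ a := by
    intro a
    have h1 : ((a:A)) = star ((1:P):A) * (a:A) := by simp
    rw [h1, hval_gen, hμ1, map_one, one_mul]
  have hone' : om' 1 = 1 := by
    have := hμext 1
    rw [hμ1] at this
    simpa using this
  -- positivity of the extension
  have hposA : ∀ y : A, 0 ≤ y → 0 ≤ om' y := by
    intro y hy
    have hysa : IsSelfAdjoint y := .of_nonneg hy
    obtain ⟨u, hu_mem, hu_lim⟩ := mem_closure_iff_seq_limit.mp (hDdense y)
    set hs : ℕ → A := fun n => (2⁻¹:ℂ) • (u n + star (u n)) with hhs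
    have hsD : ∀ n, hs n ∈ D :=
      fun n => Submodule.smul_mem _ _ (Submodule.add_mem _ (hu_mem n) (hstarD _ (hu_mem n)))
    have hsa_n : ∀ n, IsSelfAdjoint (hs n) := by
      intro n
      rw [IsSelfAdjoint, hhs, star_smul, star_add, star_star]
      have : star ((2:ℂ)⁻¹) = (2:ℂ)⁻¹ := by simp [Complex.star_def]
      rw [this, add_comm]
    set cs : ℕ → ℂ := fun n => om' (hs n) + ((‖hs n - y‖ : ℝ) : ℂ) with hcs
    have hc_nonneg : ∀ n, 0 ≤ cs n := by
      intro n
      set r : ℝ := ‖hs n - y‖ with hr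
      have hd : hs n + ((r:ℝ):ℂ) • (1:A) ∈ D :=
        Submodule.add_mem _ (hsD n) (Submodule.smul_mem _ _ h1D)
      have hnn : (0:A) ≤ hs n + ((r:ℝ):ℂ) • (1:A) := by
        have h2 : -(algebraMap ℝ A r) ≤ hs n - y :=
          IsSelfAdjoint.neg_algebraMap_norm_le_self ((hsa_n n).sub hysa)
        rw [halg] at h2
        have h3 : (0:A) ≤ (hs n - y) + (r:ℂ) • (1:A) := by
          calc (0:A) = -((r:ℂ) • (1:A)) + (r:ℂ) • (1:A) := by abel
          _ ≤ (hs n - y) + (r:ℂ) • (1:A) := add_le_add_left h2 _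
        calc (0:A) ≤ ((hs n - y) + (r:ℂ) • (1:A)) + y := add_nonneg h3 hy
        _ = hs n + (r:ℂ) • (1:A) := by abel
      have h4 := hpos0 ⟨_, hd⟩ hnn
      have h5 : om0 (⟨_, hd⟩ : D) = om' (hs n + ((r:ℝ):ℂ) • (1:A)) := (hval ⟨_, hd⟩).symm
      rw [h5] at h4
      simpa [hcs, map_add, map_smul, smul_eq_mul, hone'] using h4
    have hs_lim : Filter.Tendsto hs Filter.atTop (nhds y) := by
      have h1 : Filter.Tendsto (fun n => u n + star (u n)) Filter.atTop (nhds (y + star y)) :=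
        hu_lim.add hu_lim.star
      have h2 := h1.const_smul ((2:ℂ)⁻¹)
      rw [hysa.star_eq] at h2
      have h3 : (2⁻¹:ℂ) • (y + y) = y := by
        rw [smul_add]
        module
      rw [h3] at h2
      exact h2
    have hc_lim : Filter.Tendsto cs Filter.atTop (nhds (om' y)) := by
      have h1 : Filter.Tendsto (fun n => om' (hs n)) Filter.atTop (nhds (om' y)) :=
        (om'.continuous.tendsto y).comp hs_lim
      have h2 : Filter.Tendsto (fun n => ‖hs n - y‖) Filter.atTop (nhds 0) := by
        have h3 := (hs_lim.sub (tendsto_const_nhds (x := y))).norm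
        simpa using h3
      have h4 : Filter.Tendsto (fun n => ((‖hs n - y‖ : ℝ) : ℂ)) Filter.atTop (nhds 0) := by
        have := (Complex.continuous_ofReal.tendsto 0).comp h2
        simpa [Function.comp_def] using this
      have h5 := h1.add h4
      simpa using h5
    have hclosed : IsClosed {z : ℂ | 0 ≤ z} := by
      have h1 : {z : ℂ | 0 ≤ z} = Complex.re ⁻¹' Set.Ici 0 ∩ Complex.im ⁻¹' {0} := by
        ext z
        simp [Complex.nonneg_iff, eq_comm]
      rw [h1]
      exact ((isClosed_Ici).preimage Complex.continuous_re).inter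
        ((isClosed_singleton).preimage Complex.continuous_im)
    exact hclosed.mem_of_tendsto hc_lim (Filter.Eventually.of_forall hc_nonneg)
  -- coherence
  have hcoh : ∀ (x : A), ∀ a ∈ P, om' (x * a) = om' x * om' a := by
    intro x a ha
    have hag : ∀ x ∈ D, om' (x * a) = om' x * om' a := by
      intro x hx
      rw [hspan] at hx
      induction hx using Submodule.span_induction with
      | mem y hy =>
        obtain ⟨⟨p, q⟩, rfl⟩ := hy
        have h1 : v (p, q) * a = star (p : A) * ((q * ⟨a, ha⟩ : P) : A) := by
          simp only [hv, MulMemClass.coe_mul]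
          rw [mul_assoc]
        have h2 : v (p, q) = star (p : A) * (q : A) := rfl
        rw [h1, hval_gen, h2, hval_gen, hμmul]
        have h3 : om' a = μ ⟨a, ha⟩ := hμext ⟨a, ha⟩
        rw [h3]
        ring
      | zero => simp
      | add y z _ _ ihy ihz =>
        rw [add_mul, map_add, map_add, ihy, ihz]
        ring
      | smul r y _ ihy =>
        rw [smul_mul_assoc, map_smul, map_smul, smul_eq_mul, smul_eq_mul, ihy]
        ring
    have hcont1 : Continuous fun x : A => om' (x * a) :=
      om'.continuous.comp (continuous_id.mul continuous_const)
    have hcont2 : Continuous fun x : A => om' x * om' a :=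
      om'.continuous.mul continuous_const
    have heq := Continuous.ext_on hDdense hcont1 hcont2 hag
    exact congrFun heq x
  refine ⟨(om' : A →ₗ[ℂ] ℂ), ⟨?_, ?_⟩, ?_, ?_⟩
  · simpa using hone'
  · intro x
    simpa using hposA (star x * x) (star_mul_self_nonneg x)
  · intro x a ha
    simpa using hcoh x a ha
  · intro a
    simpa using hμext a

lemma forward_ineq (P : Subalgebra ℂ A) (μ : P →ₗ[ℂ] ℂ) (ω : A →ₗ[ℂ] ℂ)
    (hω1 : ω 1 = 1) (hωpos : ∀ x : A, 0 ≤ ω (star x * x))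
    (hcoh : ∀ x : A, ∀ a ∈ P, ω (x * a) = ω x * ω a)
    (hext : ∀ a : P, ω (a : A) = μ a)
    (J S : ℕ) (a : Fin J → P) (b : Fin S → P)
    (hle : (∑ j, star ((a j : A)) * (a j : A)) ≤ ∑ s, star ((b s : A)) * (b s : A)) :
    (∑ j, ‖μ (a j)‖ ^ 2) ≤ ∑ s, ‖μ (b s)‖ ^ 2 := by
  have hherm : ∀ z : A, ω (star z) = starRingEnd ℂ (ω z) := by
    intro z
    have hexp : ∀ c : ℂ, ω (star (z + c • (1:A)) * (z + c • 1)) =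
        ω (star z * z) + c * ω (star z) + starRingEnd ℂ c * ω z + starRingEnd ℂ c * c := by
      intro c
      rw [expand4 c z 1]
      simp only [map_add, map_smul, smul_eq_mul, star_one, mul_one, one_mul, hω1]
    have h0 : ∀ x : A, (ω (star x * x)).im = 0 := fun x =>
      ((Complex.nonneg_iff.mp (hωpos x)).2).symm
    have ht := h0 z
    have h1 := h0 (z + (1:ℂ) • 1)
    have h2 := h0 (z + Complex.I • 1)
    rw [hexp] at h1 h2
    set u : ℂ := ω (star z) with hu
    set w : ℂ := ω z with hw
    rw [Complex.ext_iff]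
    constructor
    · have e2 : (ω (star z * z) + Complex.I * u + starRingEnd ℂ Complex.I * w
          + starRingEnd ℂ Complex.I * Complex.I).im = u.re - w.re + (ω (star z * z)).im := by
        simp [Complex.add_im, Complex.mul_im, Complex.conj_I]
        ring
      rw [e2, ht] at h2
      simp only [Complex.conj_re]
      linarith
    · have e1 : (ω (star z * z) + 1 * u + starRingEnd ℂ 1 * w + starRingEnd ℂ 1 * 1).im
          = u.im + w.im + (ω (star z * z)).im := by
        simp [Complex.add_im, Complex.mul_im]
        ring
      rw [e1, ht] at h1
      simp only [Complex.conj_im]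
      linarith
  have hterm : ∀ p : P, ω (star (p:A) * (p:A)) = ((‖μ p‖ ^ 2 : ℝ) : ℂ) := by
    intro p
    rw [hcoh (star (p:A)) p p.2, hherm, hext, conj_mul_self_eq]
  have hmono : ω (∑ j, star ((a j:A)) * (a j:A)) ≤ ω (∑ s, star ((b s:A)) * (b s:A)) := by
    have key : ∀ p ∈ AddSubmonoid.closure (Set.range fun s : A => star s * s), 0 ≤ ω p := by
      intro p hp
      induction hp using AddSubmonoid.closure_induction with
      | mem x hx =>
        obtain ⟨s, rfl⟩ := hx
        exact hωpos s
      | zero => simp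
      | add x y _ _ hx hy =>
        rw [map_add]
        exact add_nonneg hx hy
    obtain ⟨p, hp, hsum⟩ := (StarOrderedRing.le_iff _ _).mp hle
    rw [hsum, map_add]
    exact le_add_of_nonneg_right (key p hp)
  have hA : ω (∑ j, star ((a j:A)) * (a j:A)) = ((∑ j, ‖μ (a j)‖ ^ 2 : ℝ) : ℂ) := by
    rw [map_sum, Finset.sum_congr rfl fun j _ => hterm (a j)]
    push_cast
    rfl
  have hB : ω (∑ s, star ((b s:A)) * (b s:A)) = ((∑ s, ‖μ (b s)‖ ^ 2 : ℝ) : ℂ) := by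
    rw [map_sum, Finset.sum_congr rfl fun s _ => hterm (b s)]
    push_cast
    rfl
  rw [hA, hB] at hmono
  exact Complex.real_le_real.mp hmono
end Aux


/-- A (nonzero) multiplicative linear functional `μ` on the polarization
`P̄` extends to a coherent state on `(A, P̄)` iff for all `a₁,…,a_J, b₁,…,b_S ∈ P̄`,
`∑ aⱼ* aⱼ ≤ ∑ bₛ* bₛ` implies `∑ |μ(aⱼ)|² ≤ ∑ |μ(bₛ)|²`. -/
theorem stmt_13 [PartialOrder A] [StarOrderedRing A]
    (P : Subalgebra ℂ A) (hP : IsPolarization P) (hno : AdmitsNormalOrdering P)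
    (μ : P →ₗ[ℂ] ℂ) (hμmul : ∀ a b : P, μ (a * b) = μ a * μ b) (hμne : μ ≠ 0) :
    (∃ ω : A →ₗ[ℂ] ℂ, IsCoherentState P ω ∧ ∀ a : P, ω (a : A) = μ a) ↔
      ∀ (J S : ℕ) (a : Fin J → P) (b : Fin S → P),
        (∑ j, star ((a j : A)) * (a j : A)) ≤ (∑ s, star ((b s : A)) * (b s : A)) →
        (∑ j, ‖μ (a j)‖ ^ 2) ≤ ∑ s, ‖μ (b s)‖ ^ 2 := by
  constructor
  · rintro ⟨ω, ⟨⟨hω1, hωpos⟩, hcoh⟩, hext⟩ J S a b hle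
    exact forward_ineq P μ ω hω1 hωpos hcoh hext J S a b hle
  · intro hyp
    obtain ⟨ω, ⟨hω1, hωpos⟩, hcoh, hext⟩ := exists_coherent P hno μ hμmul hμne hyp
    exact ⟨ω, ⟨⟨hω1, hωpos⟩, hcoh⟩, hext⟩
end

section
/- The set of multiplicative functionals on P̄ that arise as restrictions of coherent states on (A, P̄) is a weak-* closed (hence compact) subset of the maximal ideal space (character space) of the commutative unital Banach algebra P̄. -/
set_option linter.unusedSectionVars false

open scoped ComplexOrder InnerProductSpace

variable {A : Type*} [NormedRing A] [StarRing A] [CStarRing A] [NormedAlgebra ℂ A]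
  [StarModule ℂ A] [CompleteSpace A]

/-!
A state `ω` has norm `ω 1 = 1` (Cauchy–Schwarz for the GNS form `(a, b) ↦ ω (a⋆ b)`), so the
coherent states form a weak-* closed subset of the unit ball of the dual of `A`, which is
compact by Banach–Alaoglu. Restriction to `P` is weak-* continuous and sends coherent states to
characters of `P`, so the set of restricted coherent states is a compact, hence closed, subset of
the Hausdorff character space.
-/

namespace PositiveLinearMap

variable {B : Type*} [CStarAlgebra B] [PartialOrder B] [StarOrderedRing B]

/-- Cauchy–Schwarz for the GNS semi-inner product `⟪a, b⟫ = f (a⋆ b)`, applied to `1` and `x`. -/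
lemma norm_apply_sq_le (f : B →ₚ[ℂ] ℂ) (x : B) : ‖f x‖ ^ 2 ≤ ‖f 1‖ * ‖f (star x * x)‖ := by
  have hcs := norm_inner_le_norm (𝕜 := ℂ) (f.toPreGNS 1) (f.toPreGNS x)
  rw [preGNS_inner_def] at hcs
  simp only [ofPreGNS_toPreGNS, star_one, one_mul] at hcs
  have h1 := congrArg norm (f.preGNS_norm_sq (f.toPreGNS 1))
  have hx := congrArg norm (f.preGNS_norm_sq (f.toPreGNS x))
  simp only [ofPreGNS_toPreGNS, star_one, one_mul, Complex.norm_real, norm_pow, norm_norm] at h1 hx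
  calc ‖f x‖ ^ 2 ≤ (‖f.toPreGNS 1‖ * ‖f.toPreGNS x‖) ^ 2 := by gcongr
    _ = ‖f 1‖ * ‖f (star x * x)‖ := by rw [mul_pow, h1, hx]

lemma norm_apply_le (f : B →ₚ[ℂ] ℂ) (x : B) : ‖f x‖ ≤ ‖f 1‖ * ‖x‖ := by
  refine le_of_sq_le_sq ?_ (by positivity)
  calc ‖f x‖ ^ 2 ≤ ‖f 1‖ * ‖f (star x * x)‖ := f.norm_apply_sq_le x
    _ ≤ ‖f 1‖ * (‖f 1‖ * ‖star x * x‖) := by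
        gcongr; exact f.norm_apply_le_of_nonneg _ (star_mul_self_nonneg x)
    _ = (‖f 1‖ * ‖x‖) ^ 2 := by rw [CStarRing.norm_star_mul_self]; ring

end PositiveLinearMap

lemma IsState.norm_apply_le {ω : A →ₗ[ℂ] ℂ} (hω : IsState ω) (x : A) : ‖ω x‖ ≤ ‖x‖ := by
  let : CStarAlgebra A := ⟨⟩
  let := CStarAlgebra.spectralOrder A
  have := CStarAlgebra.spectralOrderedRing A
  have hpos : ∀ a : A, 0 ≤ a → 0 ≤ ω a := fun a ha => by
    rw [StarOrderedRing.nonneg_iff] at ha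
    induction ha using AddSubmonoid.closure_induction with
    | mem _ hy => obtain ⟨y, rfl⟩ := hy; exact hω.2 y
    | zero => simp
    | add _ _ _ _ hy hz => rw [map_add]; exact add_nonneg hy hz
  have h := (PositiveLinearMap.mk₀ ω hpos).norm_apply_le x
  rwa [show ⇑(PositiveLinearMap.mk₀ ω hpos) = ω from rfl, hω.1, norm_one, one_mul] at h

noncomputable def IsState.toWeakDual {ω : A →ₗ[ℂ] ℂ} (hω : IsState ω) : WeakDual ℂ A :=
  ω.mkContinuous 1 fun x => (one_mul ‖x‖).symm ▸ hω.norm_apply_le x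

def weakDualCoherentStates (P : Subalgebra ℂ A) : Set (WeakDual ℂ A) :=
  {φ | IsCoherentState P (φ : A →L[ℂ] ℂ).toLinearMap}

lemma isClosed_weakDualCoherentStates (P : Subalgebra ℂ A) :
    IsClosed (weakDualCoherentStates P) := by
  have hev := WeakDual.eval_continuous (𝕜 := ℂ) (E := A)
  simp only [weakDualCoherentStates, IsCoherentState, IsState, Set.ofPred_and, Set.ofPred_forall]
  refine ((isClosed_eq (hev 1) continuous_const).inter
    (isClosed_iInter fun x => isClosed_le continuous_const (hev _))).inter
    (isClosed_iInter fun x => isClosed_iInter fun a => isClosed_iInter fun _ =>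
      isClosed_eq (hev _) ((hev x).mul (hev a)))

lemma isCompact_weakDualCoherentStates (P : Subalgebra ℂ A) :
    IsCompact (weakDualCoherentStates P) := by
  refine WeakDual.isCompact_of_bounded_of_closed ?_ (isClosed_weakDualCoherentStates P)
  refine (Metric.isBounded_closedBall (x := (0 : StrongDual ℂ A)) (r := 1)).subset fun φ hφ => ?_
  rw [Metric.mem_closedBall, dist_zero_right]
  exact ContinuousLinearMap.opNorm_le_bound _ zero_le_one fun x =>
    (one_mul ‖x‖).symm ▸ hφ.1.norm_apply_le x

noncomputable def restrictWeakDual (P : Subalgebra ℂ A) (φ : WeakDual ℂ A) : WeakDual ℂ P :=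
  φ.comp (Subalgebra.toSubmodule P).subtypeL

lemma continuous_restrictWeakDual (P : Subalgebra ℂ A) : Continuous (restrictWeakDual P) :=
  WeakDual.continuous_of_continuous_eval fun a => WeakDual.eval_continuous (a : A)

lemma restrictWeakDual_mem_characterSpace {P : Subalgebra ℂ A} {φ : WeakDual ℂ A}
    (hφ : φ ∈ weakDualCoherentStates P) :
    restrictWeakDual P φ ∈ WeakDual.characterSpace ℂ P := by
  refine ⟨fun h0 => one_ne_zero (α := ℂ) ?_, fun a b => hφ.2 a b b.2⟩
  calc (1 : ℂ) = restrictWeakDual P φ 1 := hφ.1.1.symm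
    _ = 0 := by rw [h0]; rfl

def coherentCharacters (P : Subalgebra ℂ A) : Set (WeakDual.characterSpace ℂ P) :=
  {χ | ∃ ω : A →ₗ[ℂ] ℂ, IsCoherentState P ω ∧ ∀ a : P, ω (a : A) = χ a}

lemma image_val_coherentCharacters (P : Subalgebra ℂ A) :
    Subtype.val '' coherentCharacters P = restrictWeakDual P '' weakDualCoherentStates P := by
  ext ψ
  constructor
  · rintro ⟨χ, ⟨ω, hω, hχ⟩, rfl⟩
    exact ⟨hω.1.toWeakDual, hω, ContinuousLinearMap.ext hχ⟩
  · rintro ⟨φ, hφ, rfl⟩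
    exact ⟨⟨_, restrictWeakDual_mem_characterSpace hφ⟩, ⟨_, hφ, fun a => rfl⟩, rfl⟩

lemma isCompact_coherentCharacters (P : Subalgebra ℂ A) : IsCompact (coherentCharacters P) := by
  rw [Topology.IsEmbedding.subtypeVal.isCompact_iff, image_val_coherentCharacters]
  exact (isCompact_weakDualCoherentStates P).image (continuous_restrictWeakDual P)

theorem stmt_14_general (P : Subalgebra ℂ A) :
    IsClosed {χ : WeakDual.characterSpace ℂ P |
        ∃ ω : A →ₗ[ℂ] ℂ, IsCoherentState P ω ∧ ∀ a : P, ω (a : A) = χ a} ∧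
    IsCompact {χ : WeakDual.characterSpace ℂ P |
        ∃ ω : A →ₗ[ℂ] ℂ, IsCoherentState P ω ∧ ∀ a : P, ω (a : A) = χ a} :=
  ⟨(isCompact_coherentCharacters P).isClosed, isCompact_coherentCharacters P⟩

/-- The set of characters of `P̄` arising as restrictions of coherent
states on `(A, P̄)` is weak-* closed, hence compact, in the character space of the
commutative unital Banach algebra `P̄`. -/
theorem stmt_14 (P : Subalgebra ℂ A) (hP : IsPolarization P)
    (hno : AdmitsNormalOrdering P) :
    IsClosed {χ : WeakDual.characterSpace ℂ P |
        ∃ ω : A →ₗ[ℂ] ℂ, IsCoherentState P ω ∧ ∀ a : P, ω (a : A) = χ a} ∧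
    IsCompact {χ : WeakDual.characterSpace ℂ P |
        ∃ ω : A →ₗ[ℂ] ℂ, IsCoherentState P ω ∧ ∀ a : P, ω (a : A) = χ a} :=
  stmt_14_general P
end

section
/- Let (A, P̄) be a polarized C*-algebra with norm normal ordering, ω a coherent state, and N_ω its left kernel. The quotient P/(P ∩ N_ω) with inner product ⟨[a],[b]⟩ := ω(a*b) is a well-defined inner product space, the multiplication action γ_ω(a)[b] = [ab] satisfies ‖γ_ω(a)[b]‖_ω ≤ ‖a‖·‖[b]‖_ω, and the map U_ω([b]) := π_ω(b)v_ω extends to a unitary isomorphism of its completion H_ω^{Hardy} onto the GNS space H_ω intertwining γ_ω(a) with π_ω(a) for a ∈ P. -/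
/-!
Every claim is transported to the GNS space through `ω (b⋆ a) = ⟪π b v, π a v⟫`: the
quotient by `P* ∩ N_ω` is then the image `π(P*) v`, and the bound on `γ_ω` is the contractivity
of the ⋆-homomorphism `π`. Density is where coherence enters: `ω` is multiplicative on `P`, so
the vector `π a v - ω(a) v` has squared norm `ω(a⋆a) - |ω a|² = 0` and `π(b⋆ a) v = π(ω(a) b⋆) v`.
Normally ordered elements are dense in `A`, so `π(P*) v` is dense in the dense set `π(A) v`.
-/

set_option linter.unusedSectionVars false

open scoped ComplexOrder InnerProductSpace

variable {A : Type*} [NormedRing A] [StarRing A] [CStarRing A] [NormedAlgebra ℂ A]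
  [StarModule ℂ A] [CompleteSpace A]

namespace GNS

variable {H : Type*} [NormedAddCommGroup H] [InnerProductSpace ℂ H] [CompleteSpace H]

theorem norm_map_apply_le (π : A →⋆ₐ[ℂ] (H →L[ℂ] H)) (a : A) (w : H) :
    ‖π a w‖ ≤ ‖a‖ * ‖w‖ := by
  let _ : CStarAlgebra A := {}
  calc ‖π a w‖ ≤ ‖π a‖ * ‖w‖ := (π a).le_opNorm w
    _ ≤ ‖a‖ * ‖w‖ := by gcongr; exact NonUnitalStarAlgHom.norm_apply_le π a

theorem continuous_map_apply (π : A →⋆ₐ[ℂ] (H →L[ℂ] H)) (w : H) :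
    Continuous fun x : A => π x w :=
  AddMonoidHomClass.continuous_of_bound
    ((ContinuousLinearMap.apply ℂ H w).toLinearMap.comp π.toLinearMap) ‖w‖
    fun x => by simpa [mul_comm] using norm_map_apply_le π x w

variable {ω : A →ₗ[ℂ] ℂ} {π : A →⋆ₐ[ℂ] (H →L[ℂ] H)} {v : H}

theorem apply_star_mul_eq_inner (hrep : ∀ x : A, ω x = ⟪v, π x v⟫_ℂ) (x y : A) :
    ω (star x * y) = ⟪π x v, π y v⟫_ℂ := by
  rw [hrep, map_mul, mul_apply_eq_comp, map_star,
    ContinuousLinearMap.star_eq_adjoint, ContinuousLinearMap.adjoint_inner_right]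

theorem apply_star_mul_self_eq_norm_sq (hrep : ∀ x : A, ω x = ⟪v, π x v⟫_ℂ) (x : A) :
    ω (star x * x) = ((‖π x v‖ ^ 2 : ℝ) : ℂ) := by
  rw [apply_star_mul_eq_inner hrep, inner_self_eq_norm_sq_to_K]
  norm_cast

theorem map_apply_eq_of_apply_star_mul_sub_self_eq_zero (hrep : ∀ x : A, ω x = ⟪v, π x v⟫_ℂ)
    {a a' : A} (h : ω (star (a - a') * (a - a')) = 0) : π a v = π a' v := by
  rw [apply_star_mul_eq_inner hrep, inner_self_eq_zero, map_sub,
    sub_apply, sub_eq_zero] at h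
  exact h

theorem apply_star_mul_mul_le (hrep : ∀ x : A, ω x = ⟪v, π x v⟫_ℂ) (a b : A) :
    ω (star (a * b) * (a * b)) ≤ (‖a‖ ^ 2 : ℂ) * ω (star b * b) := by
  have hab : ‖π (a * b) v‖ ≤ ‖a‖ * ‖π b v‖ := by
    rw [map_mul]
    exact norm_map_apply_le π a (π b v)
  rw [apply_star_mul_self_eq_norm_sq hrep, apply_star_mul_self_eq_norm_sq hrep,
    ← Complex.ofReal_pow, ← Complex.ofReal_mul, Complex.real_le_real, ← mul_pow]
  gcongr

theorem apply_star_eq_conj (hrep : ∀ x : A, ω x = ⟪v, π x v⟫_ℂ) (x : A) :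
    ω (star x) = starRingEnd ℂ (ω x) := by
  have h := apply_star_mul_eq_inner hrep x 1
  rw [mul_one, map_one, one_apply_eq_self] at h
  rw [h, ← inner_conj_symm, ← hrep]

theorem map_apply_eq_smul (hrep : ∀ x : A, ω x = ⟪v, π x v⟫_ℂ) (hv : ‖v‖ = 1) {a : A}
    (ha : ω (star a * a) = ω (star a) * ω a) : π a v = ω a • v := by
  have hvv : ⟪v, v⟫_ℂ = 1 := by simp [inner_self_eq_norm_sq_to_K, hv]
  have haa : ⟪π a v, π a v⟫_ℂ = starRingEnd ℂ (ω a) * ω a := by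
    rw [← apply_star_mul_eq_inner hrep, ha, apply_star_eq_conj hrep]
  have hva : ⟪v, π a v⟫_ℂ = ω a := (hrep a).symm
  have hav : ⟪π a v, v⟫_ℂ = starRingEnd ℂ (ω a) := by rw [← inner_conj_symm, hva]
  have h0 : ⟪π a v - ω a • v, π a v - ω a • v⟫_ℂ = 0 := by
    simp only [inner_sub_left, inner_sub_right, inner_smul_left, inner_smul_right,
      haa, hva, hav, hvv]
    ring
  rwa [inner_self_eq_zero, sub_eq_zero] at h0

theorem map_apply_mem_of_normalOrdered {P : Subalgebra ℂ A}
    (hvec : ∀ a ∈ P, π a v = ω a • v) {n : ℕ} {a b : Fin n → A}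
    (hab : ∀ i, a i ∈ P ∧ b i ∈ P) :
    π (∑ i, star (b i) * a i) v ∈ {w : H | ∃ c : A, star c ∈ P ∧ w = π c v} := by
  refine ⟨∑ i, ω (a i) • star (b i), ?_, ?_⟩
  · simpa only [star_sum, star_smul, star_star] using
      Subalgebra.sum_mem P fun i _ => Subalgebra.smul_mem P (hab i).2 _
  · simp only [map_sum, sum_apply, map_mul, mul_apply_eq_comp, map_smul, smul_apply]
    exact Finset.sum_congr rfl fun i _ => by rw [hvec (a i) (hab i).1, map_smul]

theorem dense_map_star_mem_apply {P : Subalgebra ℂ A} (hno : AdmitsNormalOrdering P)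
    (hvec : ∀ a ∈ P, π a v = ω a • v) (hdense : Dense (Set.range fun x : A => π x v)) :
    Dense {w : H | ∃ c : A, star c ∈ P ∧ w = π c v} := by
  refine (DenseRange.dense_image hdense (continuous_map_apply π v) hno).mono ?_
  rintro _ ⟨_, ⟨n, a, b, hab, rfl⟩, rfl⟩
  exact map_apply_mem_of_normalOrdered hvec hab

end GNS

theorem stmt_19_general {H : Type*} [NormedAddCommGroup H] [InnerProductSpace ℂ H] [CompleteSpace H]
    (P : Subalgebra ℂ A) (hno : AdmitsNormalOrdering P)
    (ω : A →ₗ[ℂ] ℂ) (hω : IsCoherentState P ω)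
    (π : A →⋆ₐ[ℂ] (H →L[ℂ] H)) (v : H) (hGNS : IsGNS ω π v) :
    -- (1) well-definedness of the inner product on the quotient P/(P ∩ N_ω)
    (∀ a a' b : A, star a ∈ P → star a' ∈ P → star b ∈ P →
      ω (star (a - a') * (a - a')) = 0 →
      ω (star a * b) = ω (star a' * b) ∧ ω (star b * a) = ω (star b * a')) ∧
    -- (2) the norm bound for the multiplication action γ_ω
    (∀ a b : A, star a ∈ P → star b ∈ P →
      ω (star (a * b) * (a * b)) ≤ (‖a‖ ^ 2 : ℂ) * ω (star b * b)) ∧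
    -- (3) U_ω is inner-product preserving, has dense range, and intertwines
    (∀ a b : A, star a ∈ P → star b ∈ P → ⟪π a v, π b v⟫_ℂ = ω (star a * b)) ∧
    Dense {w : H | ∃ b : A, star b ∈ P ∧ w = π b v} ∧
    (∀ a b : A, star a ∈ P → star b ∈ P → π a (π b v) = π (a * b) v) := by
  obtain ⟨hv, hrep, hdense⟩ := hGNS
  have hvec : ∀ a ∈ P, π a v = ω a • v := fun a ha =>
    GNS.map_apply_eq_smul hrep hv (hω.2 (star a) a ha)
  refine ⟨fun a a' b _ _ _ h => ?_, fun a b _ _ => GNS.apply_star_mul_mul_le hrep a b,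
    fun a b _ _ => (GNS.apply_star_mul_eq_inner hrep a b).symm,
    GNS.dense_map_star_mem_apply hno hvec hdense, fun a b _ _ => by rw [map_mul]; rfl⟩
  have hπ := GNS.map_apply_eq_of_apply_star_mul_sub_self_eq_zero hrep h
  simp only [GNS.apply_star_mul_eq_inner hrep, hπ, and_self]

/-- The Hardy-type (HGNS) representation. For a coherent state `ω` on a
polarized C*-algebra `(A, P̄)` with norm normal ordering and `P = P̄*`:
(1) the inner product `⟨[a],[b]⟩ = ω(a*b)` on `P/(P ∩ N_ω)` is well defined;
(2) multiplication `γ_ω(a)[b] = [ab]` satisfies `‖γ_ω(a)[b]‖_ω ≤ ‖a‖·‖[b]‖_ω`;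
(3) `U_ω([b]) := π_ω(b)v_ω` is inner-product preserving with dense range and
intertwines `γ_ω(a)` with `π_ω(a)`, hence extends to a unitary isomorphism of the
completion of `P/(P ∩ N_ω)` onto the GNS space `H_ω`. -/
theorem stmt_19 {H : Type*} [NormedAddCommGroup H] [InnerProductSpace ℂ H] [CompleteSpace H]
    (P : Subalgebra ℂ A) (hP : IsPolarization P) (hno : AdmitsNormalOrdering P)
    (ω : A →ₗ[ℂ] ℂ) (hω : IsCoherentState P ω)
    (π : A →⋆ₐ[ℂ] (H →L[ℂ] H)) (v : H) (hGNS : IsGNS ω π v) :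
    -- (1) well-definedness of the inner product on the quotient P/(P ∩ N_ω)
    (∀ a a' b : A, star a ∈ P → star a' ∈ P → star b ∈ P →
      ω (star (a - a') * (a - a')) = 0 →
      ω (star a * b) = ω (star a' * b) ∧ ω (star b * a) = ω (star b * a')) ∧
    -- (2) the norm bound for the multiplication action γ_ω
    (∀ a b : A, star a ∈ P → star b ∈ P →
      ω (star (a * b) * (a * b)) ≤ (‖a‖ ^ 2 : ℂ) * ω (star b * b)) ∧
    -- (3) U_ω is inner-product preserving, has dense range, and intertwines
    (∀ a b : A, star a ∈ P → star b ∈ P → ⟪π a v, π b v⟫_ℂ = ω (star a * b)) ∧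
    Dense {w : H | ∃ b : A, star b ∈ P ∧ w = π b v} ∧
    (∀ a b : A, star a ∈ P → star b ∈ P → π a (π b v) = π (a * b) v) :=
  stmt_19_general P hno ω hω π v hGNS
end
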